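/- arXiv:1902.03010 — 2 statements merged into one kernel-verified Lean document; each statement's English description precedes it below -/
import Mathlib

section
/- Let m ≥ 0 and ξ ∈ ℝ³ with λ₊(ξ)² + m·λ₊(ξ) > 0 (i.e. ξ ≠ 0 or m > 0). Then the matrix U_m(ξ) is unitary and diagonalizes the Dirac symbol: U_m(ξ)* · M_m(ξ) · U_m(ξ) = diag(λ₊(ξ), λ₊(ξ), λ₋(ξ), λ₋(ξ)). -/
/-!
Write `A = ξ·α` and `B = β A`. The Clifford relations `A² = |ξ|²`, `β² = 1`, `Aβ = -βA` give
`B² = -|ξ|²`, `B* = -B`, `βB = -Bβ`, and `M_m(ξ) = β (m + B)`. With `a = λ₊ + m` the matrix is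
`U = c (a - B)` with `c² = (2(λ₊² + mλ₊))⁻¹`, so `U* U = U U* = c² (a² + |ξ|²) = 1` because
`λ₊² = |ξ|² + m²`. Pushing `β` to the front,
`U* M U = c² β (a - B)² (m + B) = c² β · 2a (m - B)(m + B) = c² · 2a λ₊² β = λ₊ β`,
which is `diag(λ₊, λ₊, λ₋, λ₋)`.
-/

open Complex Matrix

noncomputable section

/-- The 4×4 Dirac matrix `α₁` built from the Pauli matrix `σ₁ = !![0,1;1,0]`. -/
def diracAlpha1 : Matrix (Fin 4) (Fin 4) ℂ :=
  !![0, 0, 0, 1;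
     0, 0, 1, 0;
     0, 1, 0, 0;
     1, 0, 0, 0]

/-- The 4×4 Dirac matrix `α₂` built from the Pauli matrix `σ₂ = !![0,-I;I,0]`. -/
def diracAlpha2 : Matrix (Fin 4) (Fin 4) ℂ :=
  !![0, 0, 0, -I;
     0, 0, I, 0;
     0, -I, 0, 0;
     I, 0, 0, 0]

/-- The 4×4 Dirac matrix `α₃` built from the Pauli matrix `σ₃ = !![1,0;0,-1]`. -/
def diracAlpha3 : Matrix (Fin 4) (Fin 4) ℂ :=
  !![0, 0, 1, 0;
     0, 0, 0, -1;
     1, 0, 0, 0;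
     0, -1, 0, 0]

/-- The 4×4 Dirac matrix `β`. -/
def diracBeta : Matrix (Fin 4) (Fin 4) ℂ :=
  !![1, 0, 0, 0;
     0, 1, 0, 0;
     0, 0, -1, 0;
     0, 0, 0, -1]

/-- The free Dirac symbol `M_m(ξ) = ξ₁α₁ + ξ₂α₂ + ξ₃α₃ + mβ`. -/
def diracSymbol (m : ℝ) (ξ : EuclideanSpace ℝ (Fin 3)) : Matrix (Fin 4) (Fin 4) ℂ :=
  (ξ 0 : ℂ) • diracAlpha1 + (ξ 1 : ℂ) • diracAlpha2 + (ξ 2 : ℂ) • diracAlpha3 +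
    (m : ℂ) • diracBeta

/-- `λ₊(ξ) = √(|ξ|² + m²)`. -/
def lambdaPlus (m : ℝ) (ξ : EuclideanSpace ℝ (Fin 3)) : ℝ :=
  Real.sqrt (‖ξ‖ ^ 2 + m ^ 2)

/-- The Foldy–Wouthuysen–Tani matrix
`U_m(ξ) = (√2 √(λ₊² + mλ₊))⁻¹ ((λ₊ + m) I₄ + β (ξ·α))`, written out explicitly. -/
def diracU (m : ℝ) (ξ : EuclideanSpace ℝ (Fin 3)) : Matrix (Fin 4) (Fin 4) ℂ :=
  (((Real.sqrt 2 * Real.sqrt (lambdaPlus m ξ ^ 2 + m * lambdaPlus m ξ))⁻¹ : ℝ) : ℂ) •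
    !![((lambdaPlus m ξ + m : ℝ) : ℂ), 0, -(ξ 2 : ℂ), -(ξ 0 : ℂ) + I * (ξ 1 : ℂ);
       0, ((lambdaPlus m ξ + m : ℝ) : ℂ), -(ξ 0 : ℂ) - I * (ξ 1 : ℂ), (ξ 2 : ℂ);
       (ξ 2 : ℂ), (ξ 0 : ℂ) - I * (ξ 1 : ℂ), ((lambdaPlus m ξ + m : ℝ) : ℂ), 0;
       (ξ 0 : ℂ) + I * (ξ 1 : ℂ), -(ξ 2 : ℂ), 0, ((lambdaPlus m ξ + m : ℝ) : ℂ)]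

section Clifford

variable {𝕜 R : Type*} [CommRing 𝕜] [Ring R] [Algebra 𝕜 R] {A β : R} {s : 𝕜}

theorem beta_mul_mul_beta_mul (hA : A * A = s • 1) (hβ : β * β = 1)
    (hAβ : A * β = -(β * A)) : β * A * (β * A) = -(s • 1) := by
  rw [mul_assoc, ← mul_assoc A, hAβ, neg_mul, mul_neg, mul_assoc, ← mul_assoc β, hβ, one_mul, hA]

theorem add_beta_mul_mul_sub_beta_mul (hA : A * A = s • 1) (hβ : β * β = 1)
    (hAβ : A * β = -(β * A)) {l m : 𝕜} (hl : l ^ 2 = s + m ^ 2) :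
    ((l + m) • 1 + β * A) * ((l + m) • 1 - β * A) = (2 * (l ^ 2 + m * l)) • 1 := by
  obtain rfl : s = l ^ 2 - m ^ 2 := by rw [hl]; ring
  simp only [add_mul, mul_sub, smul_mul_assoc, mul_smul_comm, one_mul, mul_one,
    beta_mul_mul_beta_mul hA hβ hAβ]
  module

theorem sub_beta_mul_mul_add_beta_mul (hA : A * A = s • 1) (hβ : β * β = 1)
    (hAβ : A * β = -(β * A)) {l m : 𝕜} (hl : l ^ 2 = s + m ^ 2) :
    ((l + m) • 1 - β * A) * ((l + m) • 1 + β * A) = (2 * (l ^ 2 + m * l)) • 1 := by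
  obtain rfl : s = l ^ 2 - m ^ 2 := by rw [hl]; ring
  simp only [sub_mul, mul_add, smul_mul_assoc, mul_smul_comm, one_mul, mul_one,
    beta_mul_mul_beta_mul hA hβ hAβ]
  module

theorem add_beta_mul_conj_add_smul_beta (hA : A * A = s • 1) (hβ : β * β = 1)
    (hAβ : A * β = -(β * A)) {l m : 𝕜} (hl : l ^ 2 = s + m ^ 2) :
    ((l + m) • 1 + β * A) * (A + m • β) * ((l + m) • 1 - β * A)
      = (2 * (l ^ 2 + m * l)) • (l • β) := by
  obtain rfl : s = l ^ 2 - m ^ 2 := by rw [hl]; ring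
  have hA' (X : R) : A * (A * X) = (l ^ 2 - m ^ 2) • X := by rw [← mul_assoc, hA, smul_one_mul]
  have hβ' (X : R) : β * (β * X) = X := by rw [← mul_assoc, hβ, one_mul]
  have hAβ' (X : R) : A * (β * X) = -(β * (A * X)) := by
    rw [← mul_assoc, hAβ, neg_mul, mul_assoc]
  simp only [add_mul, mul_add, mul_sub, smul_mul_assoc, mul_smul_comm, one_mul, mul_one,
    mul_assoc, hA, hβ', hAβ, hAβ', neg_mul, mul_neg, smul_neg]
  module

end Clifford

theorem EuclideanSpace.norm_sq_fin_three (ξ : EuclideanSpace ℝ (Fin 3)) :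
    ‖ξ‖ ^ 2 = ξ 0 ^ 2 + ξ 1 ^ 2 + ξ 2 ^ 2 := by
  simp [EuclideanSpace.norm_sq_eq, Fin.sum_univ_three]

theorem lambdaPlus_sq (m : ℝ) (ξ : EuclideanSpace ℝ (Fin 3)) :
    lambdaPlus m ξ ^ 2 = ‖ξ‖ ^ 2 + m ^ 2 :=
  Real.sq_sqrt (by positivity)

def diracAlphaDot (ξ : EuclideanSpace ℝ (Fin 3)) : Matrix (Fin 4) (Fin 4) ℂ :=
  (ξ 0 : ℂ) • diracAlpha1 + (ξ 1 : ℂ) • diracAlpha2 + (ξ 2 : ℂ) • diracAlpha3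

theorem diracSymbol_eq (m : ℝ) (ξ : EuclideanSpace ℝ (Fin 3)) :
    diracSymbol m ξ = diracAlphaDot ξ + (m : ℂ) • diracBeta := rfl

theorem diracBeta_isHermitian : diracBeta.IsHermitian := by
  ext i j; fin_cases i <;> fin_cases j <;> simp [diracBeta]

theorem diracAlphaDot_isHermitian (ξ : EuclideanSpace ℝ (Fin 3)) :
    (diracAlphaDot ξ).IsHermitian := by
  ext i j; fin_cases i <;> fin_cases j <;>
    simp [diracAlphaDot, diracAlpha1, diracAlpha2, diracAlpha3]

theorem diracBeta_mul_self : diracBeta * diracBeta = 1 := by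
  ext i j; fin_cases i <;> fin_cases j <;> simp [diracBeta, Matrix.mul_apply, Fin.sum_univ_four]

theorem diracAlphaDot_mul_self (ξ : EuclideanSpace ℝ (Fin 3)) :
    diracAlphaDot ξ * diracAlphaDot ξ = ((‖ξ‖ ^ 2 : ℝ) : ℂ) • 1 := by
  rw [EuclideanSpace.norm_sq_fin_three]
  ext i j; fin_cases i <;> fin_cases j <;>
    simp [diracAlphaDot, diracAlpha1, diracAlpha2, diracAlpha3, Matrix.mul_apply,
      Fin.sum_univ_four] <;> ring_nf <;> simp [Complex.I_sq]

theorem diracAlphaDot_mul_diracBeta (ξ : EuclideanSpace ℝ (Fin 3)) :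
    diracAlphaDot ξ * diracBeta = -(diracBeta * diracAlphaDot ξ) := by
  ext i j; fin_cases i <;> fin_cases j <;>
    simp [diracAlphaDot, diracAlpha1, diracAlpha2, diracAlpha3, diracBeta, Matrix.mul_apply,
      Fin.sum_univ_four]

theorem diagonal_lambdaPlus_eq_smul_diracBeta (m : ℝ) (ξ : EuclideanSpace ℝ (Fin 3)) :
    Matrix.diagonal ![((lambdaPlus m ξ : ℝ) : ℂ), ((lambdaPlus m ξ : ℝ) : ℂ),
        (((-lambdaPlus m ξ : ℝ) : ℂ)), (((-lambdaPlus m ξ : ℝ) : ℂ))]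
      = (lambdaPlus m ξ : ℂ) • diracBeta := by
  ext i j; fin_cases i <;> fin_cases j <;> simp [diracBeta]

-- The explicit matrix carries `-β (ξ·α)`, the opposite sign to the displayed formula for `U_m(ξ)`.
theorem diracU_eq (m : ℝ) (ξ : EuclideanSpace ℝ (Fin 3)) :
    diracU m ξ = (((2 * (lambdaPlus m ξ ^ 2 + m * lambdaPlus m ξ)).sqrt⁻¹ : ℝ) : ℂ) •
      (((lambdaPlus m ξ : ℂ) + m) • 1 - diracBeta * diracAlphaDot ξ) := by
  rw [diracU, Real.sqrt_mul zero_le_two]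
  congr 1
  ext i j; fin_cases i <;> fin_cases j <;>
    simp [diracAlphaDot, diracAlpha1, diracAlpha2, diracAlpha3, diracBeta] <;> ring

theorem conjTranspose_diracU (m : ℝ) (ξ : EuclideanSpace ℝ (Fin 3)) :
    (diracU m ξ)ᴴ = (((2 * (lambdaPlus m ξ ^ 2 + m * lambdaPlus m ξ)).sqrt⁻¹ : ℝ) : ℂ) •
      (((lambdaPlus m ξ : ℂ) + m) • 1 + diracBeta * diracAlphaDot ξ) := by
  rw [diracU_eq, conjTranspose_smul, conjTranspose_sub, conjTranspose_smul, conjTranspose_one,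
    conjTranspose_mul, (diracAlphaDot_isHermitian ξ).eq, diracBeta_isHermitian.eq,
    diracAlphaDot_mul_diracBeta, sub_neg_eq_add]
  simp

theorem diracU_unitary_diagonalizes_general (m : ℝ) (ξ : EuclideanSpace ℝ (Fin 3))
    (hpos : 0 < lambdaPlus m ξ ^ 2 + m * lambdaPlus m ξ) :
    (diracU m ξ)ᴴ * diracU m ξ = 1 ∧
    diracU m ξ * (diracU m ξ)ᴴ = 1 ∧
    (diracU m ξ)ᴴ * diracSymbol m ξ * diracU m ξ
      = Matrix.diagonal
          ![((lambdaPlus m ξ : ℝ) : ℂ), ((lambdaPlus m ξ : ℝ) : ℂ),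
            (((-lambdaPlus m ξ : ℝ) : ℂ)), (((-lambdaPlus m ξ : ℝ) : ℂ))] := by
  set l := lambdaPlus m ξ
  set c : ℝ := (2 * (l ^ 2 + m * l)).sqrt⁻¹
  have hl : (l : ℂ) ^ 2 = ((‖ξ‖ ^ 2 : ℝ) : ℂ) + (m : ℂ) ^ 2 := by
    exact_mod_cast lambdaPlus_sq m ξ
  have hc : (c : ℂ) * c * (2 * ((l : ℂ) ^ 2 + m * l)) = 1 := by
    have hN : 0 < 2 * (l ^ 2 + m * l) := by positivity
    exact_mod_cast show c * c * (2 * (l ^ 2 + m * l)) = 1 by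
      rw [← mul_inv, Real.mul_self_sqrt hN.le, inv_mul_cancel₀ hN.ne']
  have hA := diracAlphaDot_mul_self ξ
  have hβ := diracBeta_mul_self
  have hAβ := diracAlphaDot_mul_diracBeta ξ
  rw [conjTranspose_diracU, diracU_eq, diracSymbol_eq, diagonal_lambdaPlus_eq_smul_diracBeta]
  refine ⟨?_, ?_, ?_⟩
  · rw [smul_mul_smul_comm, add_beta_mul_mul_sub_beta_mul hA hβ hAβ hl, smul_smul, hc, one_smul]
  · rw [smul_mul_smul_comm, sub_beta_mul_mul_add_beta_mul hA hβ hAβ hl, smul_smul, hc, one_smul]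
  · rw [smul_mul_assoc, smul_mul_smul_comm, add_beta_mul_conj_add_smul_beta hA hβ hAβ hl,
      smul_smul, hc, one_smul]

/-- for `m ≥ 0` and `ξ` with `λ₊(ξ)² + m λ₊(ξ) > 0` the
Foldy–Wouthuysen–Tani matrix `U_m(ξ)` is unitary and diagonalizes the Dirac symbol:
`U_m(ξ)* M_m(ξ) U_m(ξ) = diag(λ₊, λ₊, λ₋, λ₋)`. -/
theorem diracU_unitary_diagonalizes (m : ℝ) (hm : 0 ≤ m) (ξ : EuclideanSpace ℝ (Fin 3))
    (hpos : 0 < lambdaPlus m ξ ^ 2 + m * lambdaPlus m ξ) :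
    (diracU m ξ)ᴴ * diracU m ξ = 1 ∧
    diracU m ξ * (diracU m ξ)ᴴ = 1 ∧
    (diracU m ξ)ᴴ * diracSymbol m ξ * diracU m ξ
      = Matrix.diagonal
          ![((lambdaPlus m ξ : ℝ) : ℂ), ((lambdaPlus m ξ : ℝ) : ℂ),
            (((-lambdaPlus m ξ : ℝ) : ℂ)), (((-lambdaPlus m ξ : ℝ) : ℂ))] :=
  diracU_unitary_diagonalizes_general m ξ hpos

end
end

section
/- Let M₀ and M₁ be Hermitian K×K complex matrices and set T(r) = r·M₁ + M₀ for r ∈ ℝ. Let ρ be the maximum, over r ∈ ℝ, of the number of distinct eigenvalues of T(r). Then the set of crossing points {r ∈ ℝ : T(r) has strictly fewer than ρ distinct eigenvalues} is finite. -/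
noncomputable section

open Polynomial Matrix Finset

variable {K : ℕ}

lemma aux_charpoly_conj (U D : Matrix (Fin K) (Fin K) ℂ) (hU : U * star U = 1) :
    (U * D * star U).charpoly = D.charpoly := by
  have hmap : ∀ A B : Matrix (Fin K) (Fin K) ℂ,
      (A * B).map (C : ℂ →+* ℂ[X]) = A.map C * B.map C := fun A B => Matrix.map_mul
  have h1 : (U.map (C : ℂ →+* ℂ[X])) * ((star U).map C) = 1 := by
    rw [← hmap, hU]
    ext i j
    simp [Matrix.map_apply, Matrix.one_apply, apply_ite]
  have key : charmatrix (U * D * star U)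
      = U.map (C : ℂ →+* ℂ[X]) * charmatrix D * ((star U).map C) := by
    unfold charmatrix
    rw [RingHom.mapMatrix_apply, RingHom.mapMatrix_apply, hmap, hmap]
    rw [mul_sub, sub_mul]
    congr 1
    rw [scalar_apply, ← smul_one_eq_diagonal, Matrix.mul_smul, Matrix.smul_mul, mul_one, h1]
  rw [Matrix.charpoly, Matrix.charpoly, key, det_mul, det_mul, mul_right_comm, ← det_mul,
    h1, det_one, one_mul]

lemma aux_charpoly_hermitian {A : Matrix (Fin K) (Fin K) ℂ} (hA : A.IsHermitian) :
    A.charpoly = ∏ i : Fin K, (X - C ((hA.eigenvalues i : ℂ))) := by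
  have hU : (hA.eigenvectorUnitary : Matrix (Fin K) (Fin K) ℂ)
      * star (hA.eigenvectorUnitary : Matrix (Fin K) (Fin K) ℂ) = 1 :=
    Matrix.mem_unitaryGroup_iff.mp hA.eigenvectorUnitary.2
  conv_lhs => rw [hA.spectral_theorem]
  rw [Unitary.conjStarAlgAut_apply, aux_charpoly_conj _ _ hU,
    Matrix.charpoly_of_upperTriangular _ (Matrix.blockTriangular_diagonal _)]
  simp [RCLike.ofReal]

lemma aux_trace_pow_hermitian {A : Matrix (Fin K) (Fin K) ℂ} (hA : A.IsHermitian) (k : ℕ) :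
    Matrix.trace (A ^ k) = ∑ i : Fin K, ((hA.eigenvalues i : ℂ)) ^ k := by
  set U : Matrix (Fin K) (Fin K) ℂ := (hA.eigenvectorUnitary : Matrix (Fin K) (Fin K) ℂ)
  have hU : U * star U = 1 := Matrix.mem_unitaryGroup_iff.mp hA.eigenvectorUnitary.2
  have hU' : star U * U = 1 := Matrix.mem_unitaryGroup_iff'.mp hA.eigenvectorUnitary.2
  set D : Matrix (Fin K) (Fin K) ℂ := Matrix.diagonal (fun i => (hA.eigenvalues i : ℂ))
  have hAD : A = U * D * star U := by
    rw [hA.spectral_theorem]; rfl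
  have hpow : ∀ m : ℕ, A ^ m = U * D ^ m * star U := by
    intro m
    induction m with
    | zero => simp [pow_zero, hU]
    | succ m ih =>
      rw [pow_succ, ih, hAD]
      simp only [mul_assoc]
      rw [show star U * (U * (D * star U)) = D * star U by rw [← mul_assoc, hU', one_mul],
        pow_succ]
      simp only [mul_assoc]
  rw [hpow k, Matrix.trace_mul_cycle, hU', one_mul, Matrix.diagonal_pow,
    Matrix.trace_diagonal]
  rfl


lemma aux_hankel {K ρ : ℕ} (μ : Fin K → ℝ) :
    (Matrix.of fun j k : Fin ρ =>
        ∑ i : Fin K, ((μ i : ℂ)) ^ ((j : ℕ) + (k : ℕ))).det ≠ 0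
      ↔ ρ ≤ (Finset.univ.image μ).card := by
  classical
  set S : Finset ℝ := Finset.univ.image μ with hS
  set H : Matrix (Fin ρ) (Fin ρ) ℂ :=
    Matrix.of (fun j k : Fin ρ => ∑ i : Fin K, ((μ i : ℂ)) ^ ((j : ℕ) + (k : ℕ))) with hH
  constructor
  · intro hdet
    -- factor H = P * Q through the distinct values
    set P : Matrix (Fin ρ) {x // x ∈ S} ℂ :=
      Matrix.of (fun j s => ((s : ℝ) : ℂ) ^ (j : ℕ)) with hP
    set Q : Matrix {x // x ∈ S} (Fin ρ) ℂ :=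
      Matrix.of (fun s k => ((Finset.univ.filter fun i => μ i = (s : ℝ)).card : ℂ)
        * ((s : ℝ) : ℂ) ^ (k : ℕ)) with hQ
    have hfac : H = P * Q := by
      ext j k
      simp only [hH, Matrix.of_apply, Matrix.mul_apply, hP, hQ]
      rw [show (fun i : Fin K => ((μ i : ℂ)) ^ ((j : ℕ) + (k : ℕ)))
          = fun i : Fin K => (fun x : ℝ => ((x : ℂ)) ^ ((j : ℕ) + (k : ℕ))) (μ i) from rfl]
      rw [Finset.sum_comp (fun x : ℝ => ((x : ℂ)) ^ ((j : ℕ) + (k : ℕ))) μ]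
      rw [← hS, ← Finset.sum_coe_sort]
      refine Finset.sum_congr rfl fun s _ => ?_
      rw [nsmul_eq_mul, pow_add]
      ring
    have hrank : H.rank = ρ := by
      rw [Matrix.rank_of_isUnit H ((Matrix.isUnit_iff_isUnit_det H).mpr hdet.isUnit)]
      simp
    have : H.rank ≤ S.card := by
      rw [hfac]
      exact le_trans (Matrix.rank_mul_le_left P Q)
        (le_trans P.rank_le_card_width (by simp))
    omega
  · intro hcard hdet
    obtain ⟨v, hv, hmv⟩ := (Matrix.exists_mulVec_eq_zero_iff).mpr hdet
    obtain ⟨k₀, hk₀⟩ := Function.ne_iff.mp hv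
    simp only [Pi.zero_apply] at hk₀
    set w : Fin K → ℂ := fun i => ∑ k : Fin ρ, v k * ((μ i : ℂ)) ^ (k : ℕ) with hw
    have hconjw : ∀ i, (starRingEnd ℂ) (w i)
        = ∑ j : Fin ρ, (starRingEnd ℂ) (v j) * ((μ i : ℂ)) ^ (j : ℕ) := by
      intro i
      rw [hw, map_sum]
      refine Finset.sum_congr rfl fun j _ => ?_
      rw [_root_.map_mul, map_pow, Complex.conj_ofReal]
    have hzero : ∑ i : Fin K, (starRingEnd ℂ) (w i) * w i = 0 := by
      have h0 : star v ⬝ᵥ (H *ᵥ v) = 0 := by rw [hmv, dotProduct_zero]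
      have lhs_eq : ∑ i : Fin K, (starRingEnd ℂ) (w i) * w i
          = ∑ j : Fin ρ, ∑ k : Fin ρ, ∑ i : Fin K,
              (starRingEnd ℂ) (v j) * v k * ((μ i : ℂ)) ^ ((j : ℕ) + (k : ℕ)) := by
        have step : ∑ i : Fin K, (starRingEnd ℂ) (w i) * w i
            = ∑ i : Fin K, ∑ j : Fin ρ, ∑ k : Fin ρ,
                (starRingEnd ℂ) (v j) * v k * ((μ i : ℂ)) ^ ((j : ℕ) + (k : ℕ)) := by
          refine Finset.sum_congr rfl fun i _ => ?_
          rw [hconjw, show w i = ∑ k : Fin ρ, v k * ((μ i : ℂ)) ^ (k : ℕ) from rfl,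
            Finset.sum_mul_sum]
          exact Finset.sum_congr rfl fun j _ => Finset.sum_congr rfl fun k _ => by
            rw [pow_add]; ring
        rw [step, Finset.sum_comm]
        exact Finset.sum_congr rfl fun j _ => Finset.sum_comm
      have rhs_eq : star v ⬝ᵥ (H *ᵥ v)
          = ∑ j : Fin ρ, ∑ k : Fin ρ, ∑ i : Fin K,
              (starRingEnd ℂ) (v j) * v k * ((μ i : ℂ)) ^ ((j : ℕ) + (k : ℕ)) := by
        simp only [dotProduct, Matrix.mulVec, hH, Matrix.of_apply,
          Pi.star_apply, Complex.star_def, Finset.mul_sum, Finset.sum_mul]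
        refine Finset.sum_congr rfl fun j _ => Finset.sum_congr rfl fun k _ =>
          Finset.sum_congr rfl fun i _ => by ring
      rw [lhs_eq, ← rhs_eq, h0]
    have hwzero : ∀ i, w i = 0 := by
      have hre : ∑ i : Fin K, Complex.normSq (w i) = 0 := by
        have : ((∑ i : Fin K, Complex.normSq (w i) : ℝ) : ℂ) = 0 := by
          push_cast
          rw [← hzero]
          refine Finset.sum_congr rfl fun i _ => ?_
          rw [Complex.normSq_eq_conj_mul_self]
        exact_mod_cast this
      intro i
      have := (Finset.sum_eq_zero_iff_of_nonneg
        (fun i _ => Complex.normSq_nonneg (w i))).mp hre i (Finset.mem_univ i)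
      exact Complex.normSq_eq_zero.mp this
    set p : Polynomial ℂ := ∑ k : Fin ρ, Polynomial.C (v k) * Polynomial.X ^ (k : ℕ) with hp
    have hcoeff : ∀ k : Fin ρ, p.coeff (k : ℕ) = v k := by
      intro k
      rw [hp, Polynomial.finset_sum_coeff]
      simp only [Polynomial.coeff_C_mul, Polynomial.coeff_X_pow]
      rw [Finset.sum_eq_single k (fun j _ hjk => by
        simp [Fin.val_eq_val, Ne.symm hjk, hjk]) (by simp)]
      simp
    have hpne : p ≠ 0 := fun h => hk₀ (by rw [← hcoeff k₀, h, Polynomial.coeff_zero])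
    have hdeg : p.natDegree ≤ ρ - 1 := by
      refine Polynomial.natDegree_sum_le_of_forall_le _ _ fun j _ => ?_
      exact le_trans (Polynomial.natDegree_C_mul_X_pow_le _ _) (by omega)
    have hρpos : 0 < ρ := k₀.pos
    have heval : ∀ i : Fin K, p.IsRoot ((μ i : ℂ)) := by
      intro i
      have : p.eval ((μ i : ℂ)) = w i := by
        rw [hp, hw, Polynomial.eval_finset_sum]
        exact Finset.sum_congr rfl fun k _ => by
          rw [Polynomial.eval_mul, Polynomial.eval_C, Polynomial.eval_pow, Polynomial.eval_X]
      rw [Polynomial.IsRoot, this, hwzero]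
    have hsub : (Finset.univ.image fun i => ((μ i : ℝ) : ℂ)) ⊆ p.roots.toFinset := by
      intro z hz
      obtain ⟨i, _, rfl⟩ := Finset.mem_image.mp hz
      rw [Multiset.mem_toFinset, Polynomial.mem_roots hpne]
      exact heval i
    have hcard2 : ρ ≤ (Finset.univ.image fun i => ((μ i : ℝ) : ℂ)).card := by
      have : (Finset.univ.image fun i => ((μ i : ℝ) : ℂ))
          = Finset.image (fun x : ℝ => (x : ℂ)) S := by
        rw [hS, Finset.image_image]; rfl
      rw [this, Finset.card_image_of_injective _ Complex.ofReal_injective]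
      exact hcard
    have : ρ ≤ p.natDegree := by
      calc ρ ≤ (Finset.univ.image fun i => ((μ i : ℝ) : ℂ)).card := hcard2
        _ ≤ p.roots.toFinset.card := Finset.card_le_card hsub
        _ ≤ Multiset.card p.roots := p.roots.toFinset_card_le
        _ ≤ p.natDegree := p.card_roots'
    omega

/-- The pencil `T(r) = r M₁ + M₀` of Hermitian matrices. -/
def pencil {K : ℕ} (M₀ M₁ : Matrix (Fin K) (Fin K) ℂ) (r : ℝ) : Matrix (Fin K) (Fin K) ℂ :=
  (r : ℂ) • M₁ + M₀

/-- let `T(r) = r M₁ + M₀` with `M₀, M₁` Hermitian, and let `ρ` be the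
maximal number of distinct eigenvalues of `T(r)` over `r ∈ ℝ`.  Then the set of
crossing points, i.e. of `r` at which `T(r)` has strictly fewer than `ρ` distinct
eigenvalues, is finite. -/
theorem crossing_points_finite (K : ℕ) (hK : 1 ≤ K)
    (M₀ M₁ : Matrix (Fin K) (Fin K) ℂ) (h₀ : M₀.IsHermitian) (h₁ : M₁.IsHermitian)
    (ρ : ℕ)
    (hρ : IsGreatest {k : ℕ | ∃ r : ℝ,
        ((pencil M₀ M₁ r).charpoly.roots.toFinset.card = k)} ρ) :
    {r : ℝ | (pencil M₀ M₁ r).charpoly.roots.toFinset.card < ρ}.Finite := by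
  classical
  have hherm : ∀ r : ℝ, (pencil M₀ M₁ r).IsHermitian := by
    intro r
    refine Matrix.IsHermitian.add ?_ h₀
    rw [Matrix.IsHermitian, Matrix.conjTranspose_smul, h₁]
    congr 1
    simp
  have hcount : ∀ r : ℝ, (pencil M₀ M₁ r).charpoly.roots.toFinset.card
      = (Finset.univ.image (hherm r).eigenvalues).card := by
    intro r
    rw [aux_charpoly_hermitian (hherm r)]
    rw [show (∏ i : Fin K, (X - C (((hherm r).eigenvalues i : ℂ))))
        = ((Finset.univ.val.map fun i => (((hherm r).eigenvalues i : ℝ) : ℂ)).map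
            fun a => X - C a).prod from by rw [Multiset.map_map]; rfl]
    rw [Polynomial.roots_multiset_prod_X_sub_C]
    have h2 : (Finset.univ.val.map fun i => (((hherm r).eigenvalues i : ℝ) : ℂ)).toFinset
        = Finset.univ.image fun i => (((hherm r).eigenvalues i : ℝ) : ℂ) := by
      ext z; simp [List.mem_ofFn]
    rw [h2, show (Finset.univ.image fun i => (((hherm r).eigenvalues i : ℝ) : ℂ))
        = Finset.image (fun x : ℝ => (x : ℂ)) (Finset.univ.image (hherm r).eigenvalues) from by
          rw [Finset.image_image]; rfl,
      Finset.card_image_of_injective _ Complex.ofReal_injective]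
  set N : Matrix (Fin K) (Fin K) (Polynomial ℂ) :=
    Matrix.of fun i j => Polynomial.C (M₁ i j) * Polynomial.X + Polynomial.C (M₀ i j) with hN
  set P : Polynomial ℂ :=
    (Matrix.of fun j k : Fin ρ => Matrix.trace (N ^ ((j : ℕ) + (k : ℕ)))).det with hPdef
  have hmapN : ∀ r : ℝ, N.map (Polynomial.evalRingHom ((r : ℝ) : ℂ)) = pencil M₀ M₁ r := by
    intro r
    ext i j
    simp only [hN, Matrix.map_apply, Matrix.of_apply, Polynomial.coe_evalRingHom,
      Polynomial.eval_add, Polynomial.eval_mul, Polynomial.eval_C, Polynomial.eval_X,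
      pencil, Matrix.add_apply, Matrix.smul_apply, smul_eq_mul]
    ring
  have hevalP : ∀ r : ℝ, P.eval ((r : ℝ) : ℂ) = (Matrix.of fun j k : Fin ρ =>
      ∑ i : Fin K, (((hherm r).eigenvalues i : ℝ) : ℂ) ^ ((j : ℕ) + (k : ℕ))).det := by
    intro r
    have htr : ∀ m : ℕ, (Polynomial.evalRingHom ((r : ℝ) : ℂ)) (Matrix.trace (N ^ m))
        = ∑ i : Fin K, (((hherm r).eigenvalues i : ℝ) : ℂ) ^ m := by
      intro m
      have h1 : (Polynomial.evalRingHom ((r : ℝ) : ℂ)) (Matrix.trace (N ^ m))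
          = Matrix.trace ((N ^ m).map (Polynomial.evalRingHom ((r : ℝ) : ℂ))) := by
        simp [Matrix.trace, Matrix.map_apply, map_sum]
      have h2 : (N ^ m).map (Polynomial.evalRingHom ((r : ℝ) : ℂ))
          = (pencil M₀ M₁ r) ^ m := by
        rw [← hmapN r, ← RingHom.mapMatrix_apply, ← RingHom.mapMatrix_apply, map_pow]
      rw [h1, h2, aux_trace_pow_hermitian (hherm r) m]
    rw [show P.eval ((r : ℝ) : ℂ) = (Polynomial.evalRingHom ((r : ℝ) : ℂ)) P from rfl,
      hPdef, RingHom.map_det]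
    congr 1
    ext j k
    simp only [RingHom.mapMatrix_apply, Matrix.map_apply, Matrix.of_apply]
    exact htr _
  have hP0 : P ≠ 0 := by
    obtain ⟨r₀, hr₀⟩ := hρ.1
    have hge : ρ ≤ (Finset.univ.image (hherm r₀).eigenvalues).card := by
      rw [← hcount r₀, hr₀]
    have := (aux_hankel (hherm r₀).eigenvalues).mpr hge
    rw [← hevalP r₀] at this
    exact fun h => this (by rw [h, Polynomial.eval_zero])
  have hsub : {r : ℝ | (pencil M₀ M₁ r).charpoly.roots.toFinset.card < ρ}
      ⊆ (fun r : ℝ => ((r : ℝ) : ℂ)) ⁻¹' {z : ℂ | P.IsRoot z} := by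
    intro r hr
    simp only [Set.mem_setOf_eq] at hr
    have hlt : (Finset.univ.image (hherm r).eigenvalues).card < ρ := by
      rw [← hcount r]; exact hr
    have : P.eval ((r : ℝ) : ℂ) = 0 := by
      by_contra h
      rw [hevalP r] at h
      exact absurd ((aux_hankel (hherm r).eigenvalues).mp h) (by omega)
    exact this
  exact Set.Finite.subset ((Polynomial.finite_setOf_isRoot hP0).preimage
    (Set.injOn_of_injective Complex.ofReal_injective)) hsub


end
end
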